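/- If φ : Γ → Γ has no periodic point, then the generalized shift dynamical system (X^Γ, σ_φ) is Li-Yorke sensitive: there exists κ > 0 such that for every x ∈ X^Γ and every open neighborhood U of x there exists y ∈ U with liminf_{n→∞} D(σ_φ^n(x), σ_φ^n(y)) = 0 and limsup_{n→∞} D(σ_φ^n(x), σ_φ^n(y)) > κ. -/

import Mathlib

open Filter Topology

open scoped Classical in
/-- The metric `D` on `X^Γ`, via a fixed bijection `e : ℕ ≃ Γ`. -/
noncomputable def gsD {X Γ : Type*} (e : ℕ ≃ Γ) (x y : Γ → X) : ℝ :=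
  ∑' n : ℕ, (if x (e n) = y (e n) then (0 : ℝ) else 1) / 2 ^ (n + 1)

/-- The generalized shift `σ_φ`. -/
def gshift {X Γ : Type*} (φ : Γ → Γ) : (Γ → X) → (Γ → X) := fun x => x ∘ φ

def scrambledPair {Z : Type*} (d : Z → Z → ℝ) (f : Z → Z) (x y : Z) : Prop :=
  liminf (fun n : ℕ => d (f^[n] x) (f^[n] y)) atTop = 0 ∧
    0 < limsup (fun n : ℕ => d (f^[n] x) (f^[n] y)) atTop

/-!
Flip `x` at the points `φ^[4 ^ k] (e 0)`, `k ≥ K`. Orbits of `φ` are injective, so for large `K`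
these points avoid the finitely many coordinates that a basic neighbourhood of `x` constrains.
At the times `4 ^ k` the `e 0`-coordinates of the two orbits differ, so `D ≥ 1/2`. At the times
`2 * 4 ^ k` the coordinate `γ` reads the point `φ^[2 * 4 ^ k] γ`; if the orbit of `γ` meets that
of `e 0` at all, it does so with a fixed time lag, and `2 * 4 ^ k` is farther than that lag from
every `4 ^ j` once `k` is large. So every coordinate eventually agrees and `D → 0` along these
times.
-/

theorem gshift_iterate {X Γ : Type*} (φ : Γ → Γ) (n : ℕ) (x : Γ → X) :
    (gshift φ)^[n] x = x ∘ φ^[n] := by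
  induction n generalizing x with
  | zero => rfl
  | succ n ih =>
    rw [Function.iterate_succ_apply, ih, gshift, Function.iterate_succ', Function.comp_assoc]

theorem four_pow_sub_two_mul_four_pow_ne {c : ℤ} {k : ℕ} (hc : |c| < 4 ^ k) (j : ℕ) :
    (4 : ℤ) ^ j - 2 * 4 ^ k ≠ c := by
  obtain ⟨hc₁, hc₂⟩ := abs_lt.1 hc
  rcases le_or_gt j k with hjk | hkj
  · have : (4 : ℤ) ^ j ≤ 4 ^ k := pow_le_pow_right₀ (by norm_num) hjk
    omega
  · have : (4 : ℤ) ^ (k + 1) ≤ 4 ^ j := pow_le_pow_right₀ (by norm_num) hkj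
    rw [pow_succ] at this
    omega

namespace Function

variable {α : Type*} {f : α → α}

theorem injective_iterate_apply_of_periodicPts_eq_empty (hf : periodicPts f = ∅) (a : α) :
    Injective (f^[·] a) := by
  intro m n h
  by_contra hne
  wlog hlt : m < n generalizing m n
  · exact this h.symm (Ne.symm hne) (by omega)
  refine Set.eq_empty_iff_forall_notMem.1 hf (f^[m] a) ⟨n - m, by omega, ?_⟩
  rw [IsPeriodicPt, IsFixedPt, ← iterate_add_apply, Nat.sub_add_cancel hlt.le]
  exact h.symm

theorem tendsto_iterate_apply_cofinite (hf : periodicPts f = ∅) (a : α) :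
    Tendsto (f^[·] a) atTop cofinite :=
  Nat.cofinite_eq_atTop ▸ (injective_iterate_apply_of_periodicPts_eq_empty hf a).tendsto_cofinite

/-- Once the forward orbits of `a` and `b` meet, they stay merged with a fixed time lag. -/
theorem sub_eq_sub_of_iterate_apply_eq {a b : α} (hb : Injective (f^[·] b)) {m n m' n' : ℕ}
    (h : f^[n] a = f^[m] b) (h' : f^[n'] a = f^[m'] b) : (m : ℤ) - n = m' - n' := by
  wlog hle : n ≤ n' generalizing m n m' n'
  · exact (this h' h (by omega)).symm
  have : f^[m'] b = f^[n' - n + m] b := by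
    rw [← h', iterate_add_apply, ← h, ← iterate_add_apply, Nat.sub_add_cancel hle]
  have := hb this
  omega

theorem eventually_iterate_two_mul_four_pow_ne (hf : periodicPts f = ∅) (a b : α) :
    ∀ᶠ k in atTop, ∀ j, f^[2 * 4 ^ k] a ≠ f^[4 ^ j] b := by
  by_cases hmeet : ∃ n m, f^[n] a = f^[m] b
  · obtain ⟨n, m, hnm⟩ := hmeet
    filter_upwards [eventually_gt_atTop ((m : ℤ) - n).natAbs] with k hk j hkj
    have hlag := sub_eq_sub_of_iterate_apply_eq
      (injective_iterate_apply_of_periodicPts_eq_empty hf b) hnm hkj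
    have hc : |(m : ℤ) - n| < 4 ^ k := by
      rw [Int.abs_eq_natAbs]
      exact_mod_cast hk.trans (Nat.lt_pow_self (by norm_num))
    exact four_pow_sub_two_mul_four_pow_ne hc j (by push_cast at hlag; omega)
  · push Not at hmeet
    exact Eventually.of_forall fun k j => hmeet _ _

end Function

theorem liminf_eq_zero_of_tendsto_comp {α β : Type*} {l : Filter α} {l' : Filter β} [NeBot l']
    {u : α → ℝ} (hu : ∀ a, 0 ≤ u a) {ν : β → α} (hν : Tendsto ν l' l)
    (hlim : Tendsto (u ∘ ν) l' (𝓝 0)) : liminf u l = 0 := by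
  have hsmall : ∀ ε > 0, ∃ᶠ a in l, u a ≤ ε := fun ε hε =>
    hν.frequently (hlim.eventually (ge_mem_nhds hε)).frequently
  refine le_antisymm (le_of_forall_pos_le_add fun ε hε => ?_) ?_
  · rw [zero_add]
    exact liminf_le_of_frequently_le (hsmall ε hε) (isBoundedUnder_of ⟨0, hu⟩)
  · exact le_liminf_of_le (IsCoboundedUnder.of_frequently_le (hsmall 1 one_pos))
      (Eventually.of_forall hu)

theorem exists_finset_eqOn_subset_of_isOpen {ι : Type*} {A : ι → Type*}
    [∀ i, TopologicalSpace (A i)] {U : Set (∀ i, A i)} (hU : IsOpen U) {x : ∀ i, A i}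
    (hx : x ∈ U) : ∃ I : Finset ι, {y | ∀ i ∈ I, y i = x i} ⊆ U := by
  obtain ⟨I, u, hu, hIu⟩ := isOpen_pi_iff.1 hU x hx
  exact ⟨I, fun y hy => hIu fun i hi => hy i hi ▸ (hu i hi).2⟩

theorem exists_forall_mem_ne_and_forall_notMem_eq {ι X : Type*} [Nontrivial X] (S : Set ι)
    (x : ι → X) : ∃ y : ι → X, (∀ i ∈ S, y i ≠ x i) ∧ ∀ i ∉ S, y i = x i := by
  classical
  choose g hg using fun a : X => exists_ne a
  exact ⟨S.piecewise (g ∘ x) x, fun i hi => S.piecewise_eq_of_mem _ _ hi ▸ hg (x i),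
    fun i => S.piecewise_eq_of_notMem _ _⟩

section gsD

variable {X Γ : Type*} (e : ℕ ≃ Γ)

open scoped Classical

theorem gsD_summand_nonneg (x y : Γ → X) (n : ℕ) :
    0 ≤ (if x (e n) = y (e n) then (0 : ℝ) else 1) / 2 ^ (n + 1) := by
  split_ifs <;> positivity

theorem gsD_summand_le (x y : Γ → X) (n : ℕ) :
    (if x (e n) = y (e n) then (0 : ℝ) else 1) / 2 ^ (n + 1) ≤ 1 / 2 / 2 ^ n := by
  rw [div_div, ← pow_succ']
  split_ifs <;> simp

theorem summable_gsD_summand (x y : Γ → X) :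
    Summable fun n => (if x (e n) = y (e n) then (0 : ℝ) else 1) / 2 ^ (n + 1) :=
  (summable_geometric_two' 1).of_nonneg_of_le (gsD_summand_nonneg e x y) (gsD_summand_le e x y)

theorem gsD_nonneg (x y : Γ → X) : 0 ≤ gsD e x y :=
  tsum_nonneg (gsD_summand_nonneg e x y)

theorem gsD_le_one (x y : Γ → X) : gsD e x y ≤ 1 :=
  ((summable_gsD_summand e x y).tsum_le_tsum (gsD_summand_le e x y)
    (summable_geometric_two' 1)).trans_eq (tsum_geometric_two' 1)

theorem one_half_le_gsD {x y : Γ → X} (h : x (e 0) ≠ y (e 0)) : 1 / 2 ≤ gsD e x y := by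
  have := (summable_gsD_summand e x y).le_tsum 0 fun n _ => gsD_summand_nonneg e x y n
  simpa [gsD, h] using this

theorem tendsto_gsD_zero {ι : Type*} {l : Filter ι} {x y : ι → Γ → X}
    (h : ∀ γ, ∀ᶠ t in l, x t γ = y t γ) : Tendsto (fun t => gsD e (x t) (y t)) l (𝓝 0) := by
  have := tendsto_tsum_of_dominated_convergence (g := 0) (summable_geometric_two' 1)
    (f := fun t n => (if x t (e n) = y t (e n) then (0 : ℝ) else 1) / 2 ^ (n + 1))
    (fun n => tendsto_const_nhds.congr' ((h (e n)).mono fun t ht => by simp [ht]))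
    (Eventually.of_forall fun t n => by
      rw [Real.norm_of_nonneg (gsD_summand_nonneg e _ _ n)]
      exact gsD_summand_le e _ _ n)
  simpa [gsD] using this

end gsD

theorem stmt8_general {X Γ : Type*} [TopologicalSpace X] [Nontrivial X] (e : ℕ ≃ Γ) (φ : Γ → Γ)
    (hφ : ¬ ∃ a : Γ, ∃ n : ℕ, 1 ≤ n ∧ φ^[n] a = a) :
    ∃ κ > (0 : ℝ), ∀ x : Γ → X, ∀ U : Set (Γ → X), IsOpen U → x ∈ U →
      ∃ y ∈ U,
        liminf (fun n : ℕ => gsD e ((gshift φ)^[n] x) ((gshift φ)^[n] y)) atTop = 0 ∧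
          κ < limsup (fun n : ℕ => gsD e ((gshift φ)^[n] x) ((gshift φ)^[n] y)) atTop := by
  have hper : Function.periodicPts φ = ∅ :=
    Set.eq_empty_iff_forall_notMem.2 fun a ⟨n, hn, ha⟩ => hφ ⟨a, n, hn, ha⟩
  have h4 : Tendsto (4 ^ · : ℕ → ℕ) atTop atTop :=
    tendsto_pow_atTop_atTop_of_one_lt (by norm_num)
  refine ⟨1 / 4, by norm_num, fun x U hU hxU => ?_⟩
  obtain ⟨I, hI⟩ := exists_finset_eqOn_subset_of_isOpen hU hxU
  obtain ⟨K, hK⟩ := eventually_atTop.1 <|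
    ((Function.tendsto_iterate_apply_cofinite hper (e 0)).comp h4).eventually
      I.finite_toSet.compl_mem_cofinite
  set S : Set Γ := {γ | ∃ k ≥ K, φ^[4 ^ k] (e 0) = γ}
  obtain ⟨y, hy_on, hy_off⟩ := exists_forall_mem_ne_and_forall_notMem_eq S x
  have hyU : y ∈ U := hI fun γ hγ => hy_off γ <| by
    rintro ⟨k, hk, rfl⟩
    exact hK k hk hγ
  simp only [gshift_iterate]
  have h24 : Tendsto (fun k => 2 * 4 ^ k) atTop atTop :=
    tendsto_atTop_mono (fun k => Nat.le_mul_of_pos_left _ two_pos) h4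
  refine ⟨y, hyU, liminf_eq_zero_of_tendsto_comp (fun n => gsD_nonneg e _ _) h24
    (tendsto_gsD_zero e fun γ => ?_), ?_⟩
  · filter_upwards [Function.eventually_iterate_two_mul_four_pow_ne hper γ (e 0)] with k hk
    exact (hy_off _ fun ⟨j, _, hj⟩ => hk j hj.symm).symm
  · have hfreq : ∃ᶠ n in atTop, 1 / 2 ≤ gsD e (x ∘ φ^[n]) (y ∘ φ^[n]) :=
      h4.frequently <| (eventually_atTop.2 ⟨K, fun k hk =>
        one_half_le_gsD e fun h => hy_on _ ⟨k, hk, rfl⟩ h.symm⟩).frequently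
    linarith [le_limsup_of_frequently_le hfreq
      (isBoundedUnder_of ⟨1, fun n => gsD_le_one e _ _⟩)]

/-- If `φ : Γ → Γ` has no periodic point, then `(X^Γ, σ_φ)` is Li-Yorke
sensitive: there exists `κ > 0` such that for every `x ∈ X^Γ` and every open
neighborhood `U` of `x` there exists `y ∈ U` with
`liminf D(σ_φ^n x, σ_φ^n y) = 0` and `limsup D(σ_φ^n x, σ_φ^n y) > κ`. -/
theorem stmt8 {X Γ : Type*} [TopologicalSpace X] [DiscreteTopology X] [Finite X]
    [Nontrivial X] [Countable Γ] [Infinite Γ] (e : ℕ ≃ Γ) (φ : Γ → Γ)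
    (hφ : ¬ ∃ a : Γ, ∃ n : ℕ, 1 ≤ n ∧ φ^[n] a = a) :
    ∃ κ > (0 : ℝ), ∀ x : Γ → X, ∀ U : Set (Γ → X), IsOpen U → x ∈ U →
      ∃ y ∈ U,
        liminf (fun n : ℕ => gsD e ((gshift φ)^[n] x) ((gshift φ)^[n] y)) atTop = 0 ∧
          κ < limsup (fun n : ℕ => gsD e ((gshift φ)^[n] x) ((gshift φ)^[n] y)) atTop :=
  stmt8_general e φ hφ
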